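/- arXiv:1011.1611 — 2 statements merged into one kernel-verified Lean document; each statement's English description precedes it below -/
import Mathlib

section
/- If a topological space X has a point x with nontrivial small loop group π₁ˢ(X,x) ≠ 1, then X admits no simply connected covering space. -/
open CategoryTheory Topology

attribute [local instance] Path.Homotopic.setoid

noncomputable section

variable {X Y E : Type*} [TopologicalSpace X] [TopologicalSpace Y] [TopologicalSpace E]

/-- Build an element of the fundamental group from a homotopy class of loops. -/
def fromLoop {x : X} (p : Path.Homotopic.Quotient x x) : FundamentalGroup X x :=
  p

/-- The homotopy class of loops underlying an element of the fundamental group. -/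
def toLoop {x : X} (γ : FundamentalGroup X x) : Path.Homotopic.Quotient x x :=
  γ

/-- A fundamental group element is *small* if it has a loop representative inside every
neighborhood of the basepoint. -/
def IsSmall {x : X} (γ : FundamentalGroup X x) : Prop :=
  ∀ U ∈ nhds x, ∃ δ : Path x x, (∀ t, δ t ∈ U) ∧ fromLoop ⟦δ⟧ = γ

/-- The set of small loop classes, i.e. the carrier of the small loop group `π₁ˢ(X,x)`. -/
def smallSet (X : Type*) [TopologicalSpace X] (x : X) : Set (FundamentalGroup X x) :=
  {γ | IsSmall γ}

/-- Conjugate of a loop class at `y` by a path `α` from `x` to `y`: `α * β * α⁻¹`. -/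
def conjPath {x y : X} (α : Path x y) (β : FundamentalGroup X y) : FundamentalGroup X x :=
  fromLoop (Path.Homotopic.Quotient.trans
    (Path.Homotopic.Quotient.trans (⟦α⟧ : Path.Homotopic.Quotient x y) (toLoop β))
    (⟦α.symm⟧ : Path.Homotopic.Quotient y x))

/-- The SG subgroup `π₁ˢᵍ(X,x)`: generated by conjugates of small loop classes. -/
def sgSubgroup (X : Type*) [TopologicalSpace X] (x : X) : Subgroup (FundamentalGroup X x) :=
  Subgroup.closure {g | ∃ (y : X) (α : Path x y) (β : FundamentalGroup X y), IsSmall β ∧ g = conjPath α β}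

/-- The map induced on fundamental groups by a continuous map. -/
def piMap (f : C(X, Y)) (x : X) (γ : FundamentalGroup X x) : FundamentalGroup Y (f x) :=
  fromLoop (Path.Homotopic.Quotient.map (toLoop γ) f)

/-- A small loop space: a path-connected, non-simply connected space all of whose loops
are small. -/
def IsSmallLoopSpace (X : Type*) [TopologicalSpace X] : Prop :=
  PathConnectedSpace X ∧ ¬ SimplyConnectedSpace X ∧
    ∀ (x : X) (γ : FundamentalGroup X x), IsSmall γ

/-- A space is homotopically Hausdorff if every nontrivial loop class can be kept away from
some neighborhood of its basepoint. -/
def HomotopicallyHausdorff (X : Type*) [TopologicalSpace X] : Prop :=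
  ∀ (x : X) (γ : FundamentalGroup X x), γ ≠ 1 →
    ∃ U ∈ nhds x, ∀ δ : Path x x, (∀ t, δ t ∈ U) → fromLoop ⟦δ⟧ ≠ γ

/-- The image of `π₁(U,y) → π₁(X,y)`: classes of loops having a representative inside `U`. -/
def loopsIn (U : Set X) (y : X) : Set (FundamentalGroup X y) :=
  {γ | ∃ δ : Path y y, (∀ t, δ t ∈ U) ∧ fromLoop ⟦δ⟧ = γ}

/-- A semi-locally small loop space. -/
def SemiLocallySmallLoop (X : Type*) [TopologicalSpace X] : Prop :=
  ∀ x : X, ∃ U : Set X, IsOpen U ∧ x ∈ U ∧ ∀ y ∈ U, loopsIn U y = smallSet X y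


/-! A small loop at `x` can be represented inside an evenly covered neighbourhood of `x`, so it
lifts into a single sheet as a loop in the cover (path lifting provides a point over `x`). If the
cover is simply connected, that lift is null-homotopic, hence so is its projection, and the small
loop class is trivial. -/

theorem IsCoveringMap.surjective_of_pathConnectedSpace [PathConnectedSpace X] [Nonempty E]
    {p : E → X} (hp : IsCoveringMap p) : Function.Surjective p := fun x ↦
  let e₀ : E := Classical.arbitrary E
  let e : p ⁻¹' {x} := hp.monodromy ⟦PathConnectedSpace.somePath (p e₀) x⟧ ⟨e₀, rfl⟩
  ⟨e, e.2⟩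

theorem Bundle.Trivialization.exists_loop_lift {F : Type*} [TopologicalSpace F] {p : E → X}
    (T : Bundle.Trivialization F p) {e : E} (he : e ∈ T.source) (δ : Path (p e) (p e))
    (hδ : ∀ t, δ t ∈ T.baseSet) : ∃ Δ : Path e e, ∀ t, p (Δ t) = δ t := by
  have hmem : ∀ t, (δ t, (T e).2) ∈ T.target := fun t ↦ T.mem_target.mpr (hδ t)
  have hend : T.toOpenPartialHomeomorph.symm (p e, (T e).2) = e := T.symm_apply_mk_proj he
  refine ⟨⟨⟨fun t ↦ T.toOpenPartialHomeomorph.symm (δ t, (T e).2), ?_⟩, ?_, ?_⟩,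
    fun t ↦ T.proj_symm_apply (hmem t)⟩
  · exact T.toOpenPartialHomeomorph.symm.continuousOn.comp_continuous (by fun_prop) hmem
  · simpa only [δ.source] using hend
  · simpa only [δ.target] using hend

theorem IsSmall.eq_one_of_isCoveringMap [SimplyConnectedSpace E] {p : C(E, X)}
    (hp : IsCoveringMap p) {e : E} {γ : FundamentalGroup X (p e)} (hγ : IsSmall γ) : γ = 1 := by
  have : Nonempty (p ⁻¹' {p e}) := ⟨⟨e, rfl⟩⟩
  let T := (hp (p e)).toTrivialization
  have heT : p e ∈ T.baseSet := (hp (p e)).mem_toTrivialization_baseSet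
  obtain ⟨δ, hδT, rfl⟩ := hγ T.baseSet (T.open_baseSet.mem_nhds heT)
  obtain ⟨Δ, hΔ⟩ := T.exists_loop_lift (T.mem_source.mpr heT) δ hδT
  have hδ : Δ.map p.continuous = δ := Path.ext (funext hΔ)
  rw [← hδ]
  exact Quotient.sound ((SimplyConnectedSpace.paths_homotopic Δ (Path.refl e)).map p)


universe u

/-- if there is a point `x` with `π₁ˢ(X,x) ≠ 1`, then `X` admits no simply
connected covering space. -/
theorem no_simply_connected_cover_of_small_loop (X : Type u) [TopologicalSpace X]
    [PathConnectedSpace X] (x : X)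
    (h : ∃ γ : FundamentalGroup X x, IsSmall γ ∧ γ ≠ 1) :
    ¬ ∃ (E : Type u) (_ : TopologicalSpace E) (p : C(E, X)),
        IsCoveringMap p ∧ SimplyConnectedSpace E := by
  rintro ⟨E, _, p, hp, _⟩
  obtain ⟨γ, hγ, hγ_ne⟩ := h
  obtain ⟨e, rfl⟩ := hp.surjective_of_pathConnectedSpace x
  exact hγ_ne (hγ.eq_one_of_isCoveringMap hp)

end
end

section
/- If X admits a covering p : X̃ → X with X̃ a non-simply connected small loop space, then X is not homotopically Hausdorff. -/
open CategoryTheory Topology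

attribute [local instance] Path.Homotopic.setoid

noncomputable section

variable {X Y E : Type*} [TopologicalSpace X] [TopologicalSpace Y] [TopologicalSpace E]

/-!
A covering map is injective on fundamental groups, and any continuous map sends small loop
classes to small loop classes. So a nontrivial loop class of the small loop space `E` maps to a
nontrivial small loop class of `X`, which no neighborhood of its basepoint can exclude.
-/

theorem fromLoop_mk_eq_one_iff {x : X} (γ : Path x x) :
    fromLoop ⟦γ⟧ = 1 ↔ γ.Homotopic (Path.refl x) :=
  Quotient.eq

theorem exists_nontrivial_fundamentalGroup [PathConnectedSpace X]
    (h : ¬ SimplyConnectedSpace X) : ∃ x : X, Nontrivial (FundamentalGroup X x) := by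
  rw [simply_connected_iff_loops_nullhomotopic] at h
  push Not at h
  obtain ⟨x, γ, hγ⟩ := h inferInstance
  exact ⟨x, ⟨fromLoop ⟦γ⟧, 1, (fromLoop_mk_eq_one_iff γ).not.mpr hγ⟩⟩

theorem piMap_one (f : C(X, Y)) (x : X) : piMap f x 1 = 1 :=
  rfl

theorem IsSmall.piMap (f : C(X, Y)) {x : X} {γ : FundamentalGroup X x} (hγ : IsSmall γ) :
    IsSmall (piMap f x γ) := by
  intro U hU
  obtain ⟨δ, hδU, rfl⟩ := hγ (f ⁻¹' U) (f.continuous.continuousAt.preimage_mem_nhds hU)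
  exact ⟨δ.map f.continuous, hδU, Path.Homotopic.Quotient.mk_map δ f⟩

theorem IsCoveringMap.piMap_injective {p : C(E, X)} (hp : IsCoveringMap p) (e : E) :
    Function.Injective (piMap p e) :=
  hp.injective_path_homotopic_map e e

theorem HomotopicallyHausdorff.eq_one_of_isSmall (hX : HomotopicallyHausdorff X) {x : X}
    {γ : FundamentalGroup X x} (hγ : IsSmall γ) : γ = 1 := by
  by_contra hne
  obtain ⟨U, hU, hfar⟩ := hX x γ hne
  obtain ⟨δ, hδU, hδγ⟩ := hγ U hU
  exact hfar δ hδU hδγ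

/-- if `X` admits a covering by a (non-simply connected) small loop space, then
`X` is not homotopically Hausdorff. -/
theorem not_homotopicallyHausdorff_of_small_covering {E X : Type*} [TopologicalSpace E]
    [TopologicalSpace X] (p : C(E, X)) (hp : IsCoveringMap p) (hE : IsSmallLoopSpace E) :
    ¬ HomotopicallyHausdorff X := by
  intro hX
  obtain ⟨hconn, hnsc, hsmall⟩ := hE
  obtain ⟨x, hx⟩ := exists_nontrivial_fundamentalGroup hnsc
  obtain ⟨γ, hγ⟩ := exists_ne (1 : FundamentalGroup E x)
  refine hγ (hp.piMap_injective x ?_)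
  rw [piMap_one]
  exact hX.eq_one_of_isSmall ((hsmall x γ).piMap p)

end
end
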